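/- Intermediate product bound in the proof of Theorem 9.3 of the paper. Let m be a positive integer, let D ≥ 1 be a real number, let V be the vertex set of the complete graph on 2m vertices, and assign to each edge e a real number M_e ≥ 1. Suppose that for every subset S ⊆ V with |S| = m, the product of M_e over all edges e with exactly one endpoint in S is at least D^m. Then the product of M_e over all edges e of the complete graph satisfies ∏_{e} M_e ≥ D^{2m−1}; equivalently ∏_{e} M_e² ≥ D^{2(2m−1)}. -/
import Mathlib

open Finset

lemma cut_count_lemma (m : ℕ) (hm : 0 < m) (v w : Fin (2*m)) (hvw : v ≠ w) :
    ((Finset.powersetCard m (Finset.univ : Finset (Fin (2*m)))).filter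
      (fun S => v ∈ S ∧ w ∉ S)).card = Nat.choose (2*m-2) (m-1) := by
  have key : ((Finset.powersetCard m (Finset.univ : Finset (Fin (2*m)))).filter
      (fun S => v ∈ S ∧ w ∉ S)).card
      = (Finset.powersetCard (m-1) ((Finset.univ.erase v).erase w)).card := by
    refine Finset.card_bij' (fun S _ => S.erase v) (fun T _ => insert v T) ?hi ?hj ?li ?ri
    case hi =>
      intro S hS
      simp only [mem_filter, Finset.mem_powersetCard_univ] at hS
      obtain ⟨hcard, hv, hw⟩ := hS
      rw [Finset.mem_powersetCard]
      constructor
      · intro x hx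
        simp only [Finset.mem_erase] at hx ⊢
        exact ⟨fun h => hw (h ▸ hx.2), hx.1, Finset.mem_univ x⟩
      · rw [Finset.card_erase_of_mem hv, hcard]
    case hj =>
      intro T hT
      rw [Finset.mem_powersetCard] at hT
      obtain ⟨hsub, hcard⟩ := hT
      have hvT : v ∉ T := fun h => (Finset.mem_erase.mp (Finset.mem_of_mem_erase (hsub h))).1 rfl
      have hwT : w ∉ T := fun h => (Finset.mem_erase.mp (hsub h)).1 rfl
      simp only [mem_filter, Finset.mem_powersetCard_univ]
      refine ⟨?_, Finset.mem_insert_self _ _, ?_⟩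
      · rw [Finset.card_insert_of_notMem hvT, hcard]; omega
      · simp only [Finset.mem_insert]
        rintro (h | h)
        · exact hvw h.symm
        · exact hwT h
    case li =>
      intro S hS
      simp only [mem_filter] at hS
      exact Finset.insert_erase hS.2.1
    case ri =>
      intro T hT
      rw [Finset.mem_powersetCard] at hT
      have hvT : v ∉ T := fun h => (Finset.mem_erase.mp (Finset.mem_of_mem_erase (hT.1 h))).1 rfl
      exact Finset.erase_insert hvT
  rw [key, Finset.card_powersetCard]
  congr 1
  rw [Finset.card_erase_of_mem, Finset.card_erase_of_mem (Finset.mem_univ v), Finset.card_univ,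
    Fintype.card_fin]
  · omega
  · exact Finset.mem_erase.mpr ⟨Ne.symm hvw, Finset.mem_univ w⟩

lemma choose_identity (m : ℕ) (hm : 0 < m) :
    m * Nat.choose (2*m) m = 2*(2*m-1) * Nat.choose (2*m-2) (m-1) := by
  obtain ⟨m', rfl⟩ := Nat.exists_eq_succ_of_ne_zero hm.ne'
  rw [show 2*(m'+1)-1 = 2*m'+1 by omega, show 2*(m'+1)-2 = 2*m' by omega,
    show m'+1-1 = m' by omega, show 2*(m'+1) = 2*m'+2 by omega]
  have h1 : (2*m'+2) * Nat.choose (2*m'+1) m' = Nat.choose (2*m'+2) (m'+1) * (m'+1) := by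
    have := Nat.add_one_mul_choose_eq (2*m'+1) m'
    simpa [Nat.succ_eq_add_one, show 2*m'+1+1 = 2*m'+2 by ring] using this
  have h2 : (2*m'+1) * Nat.choose (2*m') m' = Nat.choose (2*m'+1) m' * (m'+1) := by
    have h := Nat.add_one_mul_choose_eq (2*m') m'
    have h3 : Nat.choose (2*m'+1) (m'+1) = Nat.choose (2*m'+1) m' := by
      have := Nat.choose_symm (n := 2*m'+1) (k := m') (by omega)
      rwa [show 2*m'+1-m' = m'+1 by omega] at this
    simpa [Nat.succ_eq_add_one, h3] using h
  apply Nat.eq_of_mul_eq_mul_left (show 0 < m'+1 by omega)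
  calc (m'+1) * ((m'+1) * Nat.choose (2*m'+2) (m'+1))
      = (m'+1) * (Nat.choose (2*m'+2) (m'+1) * (m'+1)) := by ring
    _ = (m'+1) * ((2*m'+2) * Nat.choose (2*m'+1) m') := by rw [← h1]
    _ = (2*m'+2) * (Nat.choose (2*m'+1) m' * (m'+1)) := by ring
    _ = (2*m'+2) * ((2*m'+1) * Nat.choose (2*m') m') := by rw [← h2]
    _ = (m'+1) * (2 * (2*m'+1) * Nat.choose (2*m') m') := by ring

/-- **Intermediate product bound in the proof of Theorem 9.3.**  With symmetric edge weights
`M v w ≥ 1` on the complete graph on `2m` vertices satisfying the balanced-cut condition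
`∏_{cut edges} M_e ≥ D^m`, the product of all edge weights is at least `D^(2m-1)`,
equivalently its square is at least `D^(2(2m-1))`. -/
theorem total_product_bound_for_bipartite_resources
    (m : ℕ) (hm : 0 < m) (D : ℝ) (hD : 1 ≤ D)
    (M : Fin (2 * m) → Fin (2 * m) → ℝ)
    (hsymm : ∀ v w, M v w = M w v)
    (hone : ∀ v w, v ≠ w → 1 ≤ M v w)
    (hcut : ∀ S : Finset (Fin (2 * m)), S.card = m →
      D ^ m ≤ ∏ v ∈ S, ∏ w ∈ Sᶜ, M v w) :
    (D ^ (2 * m - 1) ≤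
        ∏ p ∈ Finset.univ.filter (fun p : Fin (2 * m) × Fin (2 * m) => p.1 < p.2),
          M p.1 p.2) ∧
    (D ^ (2 * (2 * m - 1)) ≤
        (∏ p ∈ Finset.univ.filter (fun p : Fin (2 * m) × Fin (2 * m) => p.1 < p.2),
          M p.1 p.2) ^ 2) := by
  classical
  set F := Finset.powersetCard m (Finset.univ : Finset (Fin (2*m))) with hFdef
  set k := Nat.choose (2*m-2) (m-1) with hkdef
  set P := ∏ p ∈ Finset.univ.filter (fun p : Fin (2 * m) × Fin (2 * m) => p.1 < p.2),
      M p.1 p.2 with hPdef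
  have hD0 : (0:ℝ) ≤ D := le_trans zero_le_one hD
  have hP1 : 1 ≤ P := by
    rw [hPdef]
    calc (1:ℝ) = ∏ _p ∈ Finset.univ.filter (fun p : Fin (2 * m) × Fin (2 * m) => p.1 < p.2),
          (1:ℝ) := by rw [Finset.prod_const_one]
      _ ≤ _ := by
          apply Finset.prod_le_prod (fun _ _ => zero_le_one)
          intro p hp
          simp only [mem_filter] at hp
          exact hone _ _ (ne_of_lt hp.2)
  have hP0 : (0:ℝ) ≤ P := le_trans zero_le_one hP1
  have hFcard : F.card = Nat.choose (2*m) m := by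
    rw [hFdef, Finset.card_powersetCard, Finset.card_univ, Fintype.card_fin]
  -- Step 1: multiply all cut inequalities
  have h1 : D ^ (m * F.card) ≤ ∏ S ∈ F, ∏ v ∈ S, ∏ w ∈ Sᶜ, M v w := by
    calc D ^ (m * F.card) = ∏ _S ∈ F, D ^ m := by
          rw [Finset.prod_const, ← pow_mul]
      _ ≤ _ := by
          apply Finset.prod_le_prod
          · intro S _; positivity
          · intro S hS
            rw [hFdef, Finset.mem_powersetCard_univ] at hS
            exact hcut S hS
  -- Step 2: reorganize the big product
  have h2 : ∏ S ∈ F, ∏ v ∈ S, ∏ w ∈ Sᶜ, M v w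
      = ∏ p ∈ Finset.univ.filter (fun p : Fin (2*m) × Fin (2*m) => p.1 ≠ p.2),
          (M p.1 p.2) ^ k := by
    have step : ∏ S ∈ F, ∏ v ∈ S, ∏ w ∈ Sᶜ, M v w
        = ∏ p ∈ Finset.univ.filter (fun p : Fin (2*m) × Fin (2*m) => p.1 ≠ p.2),
            ∏ S ∈ F.filter (fun S => p.1 ∈ S ∧ p.2 ∉ S), M p.1 p.2 := by
      have inner : ∀ S : Finset (Fin (2*m)), (∏ v ∈ S, ∏ w ∈ Sᶜ, M v w)
          = ∏ p ∈ S ×ˢ Sᶜ, M p.1 p.2 := fun S => (Finset.prod_product' ..).symm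
      simp_rw [inner]
      apply Finset.prod_comm'
      intro S p
      simp only [Finset.mem_product, mem_filter, Finset.mem_compl, Finset.mem_univ,
        true_and]
      constructor
      · rintro ⟨hS, h1', h2'⟩
        exact ⟨⟨hS, h1', h2'⟩, fun h => h2' (h ▸ h1')⟩
      · rintro ⟨⟨hS, h1', h2'⟩, _⟩
        exact ⟨hS, h1', h2'⟩
    rw [step]
    apply Finset.prod_congr rfl
    intro p hp
    simp only [mem_filter, Finset.mem_univ, true_and] at hp
    rw [Finset.prod_const, hFdef, cut_count_lemma m hm p.1 p.2 hp]
  -- Step 3: the product over ordered distinct pairs equals P^2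
  have h3 : ∏ p ∈ Finset.univ.filter (fun p : Fin (2*m) × Fin (2*m) => p.1 ≠ p.2),
      M p.1 p.2 = P ^ 2 := by
    have split := Finset.prod_filter_mul_prod_filter_not
      (Finset.univ.filter (fun p : Fin (2*m) × Fin (2*m) => p.1 ≠ p.2))
      (fun p => p.1 < p.2) (fun p => M p.1 p.2)
    rw [← split]
    have e1 : (Finset.univ.filter (fun p : Fin (2*m) × Fin (2*m) => p.1 ≠ p.2)).filter
        (fun p => p.1 < p.2)
        = Finset.univ.filter (fun p : Fin (2*m) × Fin (2*m) => p.1 < p.2) := by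
      rw [Finset.filter_filter]
      apply Finset.filter_congr
      intro p _
      constructor
      · exact fun h => h.2
      · exact fun h => ⟨ne_of_lt h, h⟩
    have e2 : (Finset.univ.filter (fun p : Fin (2*m) × Fin (2*m) => p.1 ≠ p.2)).filter
        (fun p => ¬ p.1 < p.2)
        = Finset.univ.filter (fun p : Fin (2*m) × Fin (2*m) => p.2 < p.1) := by
      rw [Finset.filter_filter]
      apply Finset.filter_congr
      intro p _
      constructor
      · rintro ⟨h1', h2'⟩
        exact lt_of_le_of_ne (not_lt.mp h2') (Ne.symm h1')
      · exact fun h => ⟨(ne_of_lt h).symm, not_lt.mpr (le_of_lt h)⟩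
    have e3 : ∏ p ∈ Finset.univ.filter (fun p : Fin (2*m) × Fin (2*m) => p.2 < p.1),
        M p.1 p.2 = P := by
      rw [hPdef]
      refine Finset.prod_bij' (fun p _ => Prod.swap p) (fun p _ => Prod.swap p)
        ?_ ?_ ?_ ?_ ?_
      · intro p hp; simp only [mem_filter, Finset.mem_univ, true_and] at hp ⊢; exact hp
      · intro p hp; simp only [mem_filter, Finset.mem_univ, true_and] at hp ⊢; exact hp
      · intro p _; simp
      · intro p _; simp
      · intro p _; exact hsymm p.1 p.2
    rw [e1, e2, e3, sq]
  -- Combine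
  have h4 : D ^ (2*(2*m-1) * k) ≤ (P ^ 2) ^ k := by
    have h := h1.trans (le_of_eq h2)
    rw [Finset.prod_pow, h3] at h
    rwa [hFcard, choose_identity m hm] at h
  have hk : k ≠ 0 := (Nat.choose_pos (show m-1 ≤ 2*m-2 by omega)).ne'
  have h5 : D ^ (2*(2*m-1)) ≤ P ^ 2 := by
    have h4' : (D ^ (2*(2*m-1))) ^ k ≤ (P ^ 2) ^ k := by
      rw [← pow_mul]; exact h4
    exact le_of_pow_le_pow_left₀ hk (by positivity) h4'
  refine ⟨?_, h5⟩
  have h6 : (D ^ (2*m-1)) ^ 2 ≤ P ^ 2 := by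
    rw [← pow_mul]
    rw [show (2*m-1)*2 = 2*(2*m-1) from Nat.mul_comm _ _]
    exact h5
  exact le_of_pow_le_pow_left₀ two_ne_zero hP0 h6
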